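/- arXiv:math/0604164 — 5 statements merged into one kernel-verified Lean document; each statement's English description precedes it below -/
import Mathlib

section
/- Let θ : ℝ → ℝ be a smooth function with 0 < θ(s) < π for all s, and define β(s,φ) = c(s) + r(s)cos θ(s)·t(s) + r(s)sin θ(s)·(cos φ·n(s) + sin φ·b(s)). Then for every (s,φ) one has ‖β(s,φ) − c(s)‖ = r(s) (so β(s,φ) lies on the sphere of center c(s) and radius r(s)), and the inner product ⟨∂β/∂s(s,φ), β(s,φ) − c(s)⟩ equals r(s)·(cos θ(s) + r'(s)). In particular β is tangent to the sphere of center c(s) and radius r(s) at every point (s,φ) if and only if cos θ(s) = −r'(s) for all s. -/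
open scoped RealInnerProductSpace

noncomputable def cross3 (u v : EuclideanSpace ℝ (Fin 3)) : EuclideanSpace ℝ (Fin 3) :=
  (WithLp.equiv 2 (Fin 3 → ℝ)).symm
    ![u 1 * v 2 - u 2 * v 1, u 2 * v 0 - u 0 * v 2, u 0 * v 1 - u 1 * v 0]

lemma cross3_inner_left (u v : EuclideanSpace ℝ (Fin 3)) : ⟪u, cross3 u v⟫ = 0 := by
  simp [cross3, PiLp.inner_apply, Fin.sum_univ_three, RCLike.inner_apply]
  ring

lemma cross3_inner_right (u v : EuclideanSpace ℝ (Fin 3)) : ⟪v, cross3 u v⟫ = 0 := by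
  simp [cross3, PiLp.inner_apply, Fin.sum_univ_three, RCLike.inner_apply]
  ring

lemma cross3_lagrange (u v : EuclideanSpace ℝ (Fin 3)) :
    ⟪cross3 u v, cross3 u v⟫ = ⟪u, u⟫ * ⟪v, v⟫ - ⟪u, v⟫ ^ 2 := by
  simp only [PiLp.inner_apply]
  simp [cross3, PiLp.inner_apply, Fin.sum_univ_three, RCLike.inner_apply]
  ring

lemma diff_coord {f : ℝ → EuclideanSpace ℝ (Fin 3)} {s : ℝ} (hf : DifferentiableAt ℝ f s)
    (i : Fin 3) : DifferentiableAt ℝ (fun s => f s i) s :=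
  ((EuclideanSpace.proj i).differentiableAt (𝕜 := ℝ)).comp s hf

lemma cross3_diff {f g : ℝ → EuclideanSpace ℝ (Fin 3)} {s : ℝ}
    (hf : DifferentiableAt ℝ f s) (hg : DifferentiableAt ℝ g s) :
    DifferentiableAt ℝ (fun s => cross3 (f s) (g s)) s := by
  have : (fun s => cross3 (f s) (g s)) = fun s =>
      (PiLp.continuousLinearEquiv 2 ℝ (fun _ : Fin 3 => ℝ)).symm
        ![f s 1 * g s 2 - f s 2 * g s 1, f s 2 * g s 0 - f s 0 * g s 2,
          f s 0 * g s 1 - f s 1 * g s 0] := rfl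
  rw [this]
  apply (PiLp.continuousLinearEquiv 2 ℝ (fun _ : Fin 3 => ℝ)).symm.differentiableAt.comp
  apply differentiableAt_pi.2
  intro i
  fin_cases i <;>
    simp only [Matrix.cons_val_zero, Matrix.cons_val_one, Matrix.head_cons,
      Matrix.cons_val_two, Matrix.tail_cons] <;>
    exact ((diff_coord hf _).mul (diff_coord hg _)).sub ((diff_coord hf _).mul (diff_coord hg _))

theorem canal_sphere_tangency
    (c : ℝ → EuclideanSpace ℝ (Fin 3)) (r κ τ : ℝ → ℝ)
    (t n b : ℝ → EuclideanSpace ℝ (Fin 3))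
    (hc : ContDiff ℝ (⊤ : ℕ∞) c) (hr : ContDiff ℝ (⊤ : ℕ∞) r)
    (harc : ∀ s, ‖deriv c s‖ = 1)
    (hκ : ∀ s, κ s = ‖deriv (deriv c) s‖)
    (hκpos : ∀ s, 0 < κ s)
    (ht : ∀ s, t s = deriv c s)
    (hn : ∀ s, n s = (κ s)⁻¹ • deriv (deriv c) s)
    (hb : ∀ s, b s = cross3 (t s) (n s))
    (hτ : ∀ s, deriv n s = (-κ s) • t s + τ s • b s)
    (hrpos : ∀ s, 0 < r s)
    (θ : ℝ → ℝ) (hθ : ContDiff ℝ (⊤ : ℕ∞) θ)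
    (hθrange : ∀ s, 0 < θ s ∧ θ s < Real.pi)
    (β : ℝ → ℝ → EuclideanSpace ℝ (Fin 3))
    (hβ : ∀ s φ, β s φ = c s + (r s * Real.cos (θ s)) • t s +
      (r s * Real.sin (θ s)) • (Real.cos φ • n s + Real.sin φ • b s)) :
    (∀ s φ, ‖β s φ - c s‖ = r s ∧
      ⟪deriv (fun u => β u φ) s, β s φ - c s⟫ = r s * (Real.cos (θ s) + deriv r s)) ∧
    ((∀ s φ, ⟪deriv (fun u => β u φ) s, β s φ - c s⟫ = 0) ↔
      (∀ s, Real.cos (θ s) = -deriv r s)) := by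
  -- smoothness of derivatives of c
  have hc1 : ContDiff ℝ (⊤ : ℕ∞) c := hc.of_le (by simp)
  have hc' : ContDiff ℝ (⊤ : ℕ∞) (deriv c) := (contDiff_infty_iff_deriv.mp hc1).2
  have hc'' : ContDiff ℝ (⊤ : ℕ∞) (deriv (deriv c)) := (contDiff_infty_iff_deriv.mp hc').2
  have hdc : Differentiable ℝ c := hc1.differentiable (by simp)
  have hdc' : Differentiable ℝ (deriv c) := hc'.differentiable (by simp)
  have hdc'' : Differentiable ℝ (deriv (deriv c)) := hc''.differentiable (by simp)
  have hκne : ∀ s, κ s ≠ 0 := fun s => (hκpos s).ne'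
  have hc''ne : ∀ s, deriv (deriv c) s ≠ 0 := by
    intro s h
    have := hκ s
    rw [h, norm_zero] at this
    exact hκne s this
  -- differentiability of the frame
  have htdiff : ∀ s, DifferentiableAt ℝ t s := by
    intro s
    have : t = deriv c := funext ht
    rw [this]; exact hdc' s
  have hκdiff : ∀ s, DifferentiableAt ℝ κ s := by
    intro s
    have : κ = fun s => ‖deriv (deriv c) s‖ := funext hκ
    rw [this]
    exact ((hc''.contDiffAt).norm ℝ (hc''ne s)).differentiableAt (by norm_num)
  have hndiff : ∀ s, DifferentiableAt ℝ n s := by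
    intro s
    have : n = fun s => (κ s)⁻¹ • deriv (deriv c) s := funext hn
    rw [this]
    exact ((hκdiff s).inv (hκne s)).smul (hdc'' s)
  have hbdiff : ∀ s, DifferentiableAt ℝ b s := by
    intro s
    have : b = fun s => cross3 (t s) (n s) := funext hb
    rw [this]
    exact cross3_diff (htdiff s) (hndiff s)
  -- orthonormality of the frame
  have htt : ∀ s, ⟪t s, t s⟫ = 1 := by
    intro s
    rw [ht, real_inner_self_eq_norm_sq, harc]; norm_num
  have hnn : ∀ s, ⟪n s, n s⟫ = 1 := by
    intro s
    rw [hn, real_inner_smul_left, real_inner_smul_right, real_inner_self_eq_norm_sq, ← hκ,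
      ← mul_assoc]
    field_simp
    exact div_self (hκne s)
  have hct : ∀ s, ⟪deriv c s, deriv (deriv c) s⟫ = 0 := by
    intro s
    have h1 : HasDerivAt (fun u => ⟪deriv c u, deriv c u⟫)
        (⟪deriv c s, deriv (deriv c) s⟫ + ⟪deriv (deriv c) s, deriv c s⟫) s :=
      HasDerivAt.inner ℝ (hdc' s).hasDerivAt (hdc' s).hasDerivAt
    have heq : (fun u => ⟪deriv c u, deriv c u⟫) = fun _ : ℝ => (1 : ℝ) := by
      funext u
      rw [real_inner_self_eq_norm_sq, harc]; norm_num
    rw [heq] at h1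
    have h2 : (⟪deriv c s, deriv (deriv c) s⟫ + ⟪deriv (deriv c) s, deriv c s⟫ : ℝ) = 0 :=
      h1.unique (hasDerivAt_const s 1)
    rw [real_inner_comm (deriv c s)] at h2
    linarith
  have htn : ∀ s, ⟪t s, n s⟫ = 0 := by
    intro s
    rw [ht, hn, real_inner_smul_right, hct]; ring
  have htb : ∀ s, ⟪t s, b s⟫ = 0 := by
    intro s; rw [hb]; exact cross3_inner_left _ _
  have hnb : ∀ s, ⟪n s, b s⟫ = 0 := by
    intro s; rw [hb]; exact cross3_inner_right _ _
  have hbb : ∀ s, ⟪b s, b s⟫ = 1 := by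
    intro s
    rw [hb, cross3_lagrange, htt, hnn, htn]; ring
  have hnt : ∀ s, ⟪n s, t s⟫ = 0 := fun s => by rw [real_inner_comm, htn]
  have hbt : ∀ s, ⟪b s, t s⟫ = 0 := fun s => by rw [real_inner_comm, htb]
  have hbn : ∀ s, ⟪b s, n s⟫ = 0 := fun s => by rw [real_inner_comm, hnb]
  -- decomposition of β - c
  have hv : ∀ s φ, β s φ - c s = (r s * Real.cos (θ s)) • t s +
      (r s * Real.sin (θ s)) • (Real.cos φ • n s + Real.sin φ • b s) := by
    intro s φ; rw [hβ]; abel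
  -- squared norm
  have hvv : ∀ s φ, ⟪β s φ - c s, β s φ - c s⟫ = r s ^ 2 := by
    intro s φ
    rw [hv]
    have h1 := Real.sin_sq_add_cos_sq φ
    have h2 := Real.sin_sq_add_cos_sq (θ s)
    simp only [inner_add_left, inner_add_right, real_inner_smul_left, real_inner_smul_right,
      htt, hnn, hbb, htn, htb, hnb, hnt, hbt, hbn]
    linear_combination (r s * Real.sin (θ s))^2 * h1 + (r s)^2 * h2
  have hnorm : ∀ s φ, ‖β s φ - c s‖ = r s := by
    intro s φ
    have h1 : ‖β s φ - c s‖ ^ 2 = r s ^ 2 := by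
      rw [← real_inner_self_eq_norm_sq, hvv]
    calc ‖β s φ - c s‖ = Real.sqrt (‖β s φ - c s‖ ^ 2) := (Real.sqrt_sq (norm_nonneg _)).symm
      _ = Real.sqrt (r s ^ 2) := by rw [h1]
      _ = r s := Real.sqrt_sq (hrpos s).le
  -- tangent inner product
  have hβdiff : ∀ s φ, DifferentiableAt ℝ (fun u => β u φ) s := by
    intro s φ
    have : (fun u => β u φ) = fun u => c u + (r u * Real.cos (θ u)) • t u +
        (r u * Real.sin (θ u)) • (Real.cos φ • n u + Real.sin φ • b u) :=
      funext fun u => hβ u φ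
    rw [this]
    have hrd : DifferentiableAt ℝ r s := hr.differentiable (by simp) s
    have hθd : DifferentiableAt ℝ θ s := hθ.differentiable (by simp) s
    exact ((hdc s).add ((hrd.mul hθd.cos).smul (htdiff s))).add
      ((hrd.mul hθd.sin).smul (show DifferentiableAt ℝ (fun u => Real.cos φ • n u + Real.sin φ • b u) s from ((hndiff s).const_smul (Real.cos φ)).add ((hbdiff s).const_smul (Real.sin φ))))
  have htv : ∀ s φ, ⟪deriv c s, β s φ - c s⟫ = r s * Real.cos (θ s) := by
    intro s φ
    rw [← ht, hv]
    simp only [inner_add_right, real_inner_smul_right, htt, htn, htb]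
    ring
  have hmain : ∀ s φ, ⟪deriv (fun u => β u φ) s, β s φ - c s⟫
      = r s * (Real.cos (θ s) + deriv r s) := by
    intro s φ
    have hvd : HasDerivAt (fun u => β u φ - c u)
        (deriv (fun u => β u φ) s - deriv c s) s :=
      (hβdiff s φ).hasDerivAt.sub (hdc s).hasDerivAt
    have h1 : HasDerivAt (fun u => ⟪β u φ - c u, β u φ - c u⟫)
        (⟪β s φ - c s, deriv (fun u => β u φ) s - deriv c s⟫ +
          ⟪deriv (fun u => β u φ) s - deriv c s, β s φ - c s⟫) s :=
      HasDerivAt.inner ℝ hvd hvd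
    have heq : (fun u => ⟪β u φ - c u, β u φ - c u⟫) = fun u => r u ^ 2 :=
      funext fun u => hvv u φ
    rw [heq] at h1
    have h2 : HasDerivAt (fun u => r u ^ 2) (2 * r s * deriv r s) s := by
      have := ((hr.differentiable (by simp) s).hasDerivAt).pow 2
      show HasDerivAt (r ^ 2) _ s
      simpa [mul_comm, mul_assoc] using this
    have h3 := h1.unique h2
    have h4 : ⟪deriv (fun u => β u φ) s - deriv c s, β s φ - c s⟫ = r s * deriv r s := by
      rw [real_inner_comm]
      rw [real_inner_comm (β s φ - c s)] at h3
      linarith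
    have h5 : ⟪deriv (fun u => β u φ) s, β s φ - c s⟫
        = ⟪deriv (fun u => β u φ) s - deriv c s, β s φ - c s⟫ + ⟪deriv c s, β s φ - c s⟫ := by
      rw [← inner_add_left, sub_add_cancel]
    rw [h5, h4, htv]
    ring
  refine ⟨fun s φ => ⟨hnorm s φ, hmain s φ⟩, ?_, ?_⟩
  · intro h s
    have := hmain s 0
    rw [h s 0] at this
    have hr0 := (hrpos s).ne'
    have : Real.cos (θ s) + deriv r s = 0 := by
      rcases mul_eq_zero.mp this.symm with h' | h'
      · exact absurd h' hr0
      · exact h'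
    linarith
  · intro h s φ
    rw [hmain s φ, h s]
    ring
end

section
/- Assume the regularity condition κ(s)·r(s)·√(1−r'(s)²) < 1 − r'(s)² − r(s)·r''(s) for all s. Then α is an immersion: at every point (s,φ), the partial derivatives ∂α/∂s(s,φ) and ∂α/∂φ(s,φ) are linearly independent. -/
open scoped RealInnerProductSpace
open scoped ContDiff

section Aux

lemma inner3 (x y : EuclideanSpace ℝ (Fin 3)) : ⟪x, y⟫ = x 0 * y 0 + x 1 * y 1 + x 2 * y 2 := by
  simp [PiLp.inner_apply, Fin.sum_univ_three, RCLike.inner_apply, mul_comm]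

lemma cross3_apply (u v : EuclideanSpace ℝ (Fin 3)) (i : Fin 3) :
    cross3 u v i = ![u 1 * v 2 - u 2 * v 1, u 2 * v 0 - u 0 * v 2, u 0 * v 1 - u 1 * v 0] i := by
  rfl

lemma inner_cross_left (u v : EuclideanSpace ℝ (Fin 3)) : ⟪cross3 u v, u⟫ = 0 := by
  simp [inner3, cross3_apply, Fin.sum_univ_three]; ring

lemma inner_cross_right (u v : EuclideanSpace ℝ (Fin 3)) : ⟪cross3 u v, v⟫ = 0 := by
  simp [inner3, cross3_apply, Fin.sum_univ_three]; ring

lemma inner_cross_smul_self (a : ℝ) (x z : EuclideanSpace ℝ (Fin 3)) :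
    ⟪cross3 (a • x) x, z⟫ = 0 := by
  simp [inner3, cross3_apply, Fin.sum_univ_three]; ring

lemma cross_lagrange (u v : EuclideanSpace ℝ (Fin 3)) :
    ⟪cross3 u v, cross3 u v⟫ = ⟪u,u⟫ * ⟪v,v⟫ - ⟪u,v⟫ ^ 2 := by
  simp only [inner3, cross3_apply, Matrix.cons_val_zero, Matrix.cons_val_one, Matrix.cons_val_two,
    Matrix.head_cons, Matrix.tail_cons]; ring

lemma hasDerivAt_comp_proj {f : ℝ → EuclideanSpace ℝ (Fin 3)} {f' : EuclideanSpace ℝ (Fin 3)}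
    {x : ℝ} (i : Fin 3) (h : HasDerivAt f f' x) :
    HasDerivAt (fun u => f u i) (f' i) x :=
  ((EuclideanSpace.proj i).hasFDerivAt.comp_hasDerivAt x h : )

lemma hasDerivAt_cross {f g : ℝ → EuclideanSpace ℝ (Fin 3)}
    {f' g' : EuclideanSpace ℝ (Fin 3)} {x : ℝ}
    (hf : HasDerivAt f f' x) (hg : HasDerivAt g g' x) :
    HasDerivAt (fun u => cross3 (f u) (g u)) (cross3 f' (g x) + cross3 (f x) g') x := by
  have h0 := hasDerivAt_comp_proj 0 hf
  have h1 := hasDerivAt_comp_proj 1 hf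
  have h2 := hasDerivAt_comp_proj 2 hf
  have k0 := hasDerivAt_comp_proj 0 hg
  have k1 := hasDerivAt_comp_proj 1 hg
  have k2 := hasDerivAt_comp_proj 2 hg
  have c0 : HasDerivAt (fun u => cross3 (f u) (g u) 0)
      ((cross3 f' (g x) + cross3 (f x) g') 0) x := by
    simp only [PiLp.add_apply, cross3_apply, Matrix.cons_val_zero]
    exact ((h1.mul k2).sub (h2.mul k1)).congr_deriv (by ring)
  have c1 : HasDerivAt (fun u => cross3 (f u) (g u) 1)
      ((cross3 f' (g x) + cross3 (f x) g') 1) x := by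
    simp only [PiLp.add_apply, cross3_apply, Matrix.cons_val_one,
      Matrix.head_cons, Matrix.cons_val_zero]
    exact ((h2.mul k0).sub (h0.mul k2)).congr_deriv (by ring)
  have c2 : HasDerivAt (fun u => cross3 (f u) (g u) 2)
      ((cross3 f' (g x) + cross3 (f x) g') 2) x := by
    simp only [PiLp.add_apply, cross3_apply, Matrix.cons_val_two,
      Matrix.tail_cons, Matrix.head_cons]
    exact ((h0.mul k1).sub (h1.mul k0)).congr_deriv (by ring)
  have hcomp : ∀ i, HasDerivAt (fun u => cross3 (f u) (g u) i)
      ((cross3 f' (g x) + cross3 (f x) g') i) x := by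
    intro i; fin_cases i
    exacts [c0, c1, c2]
  have hF : HasDerivAt (fun u => (fun i => cross3 (f u) (g u) i))
      (fun i => (cross3 f' (g x) + cross3 (f x) g') i) x := hasDerivAt_pi.2 hcomp
  exact ((PiLp.continuousLinearEquiv 2 ℝ (fun _ : Fin 3 => ℝ)).symm.hasFDerivAt.comp_hasDerivAt
    x hF : )

end Aux

set_option maxHeartbeats 1000000 in
theorem canal_surface_immersion
    (c : ℝ → EuclideanSpace ℝ (Fin 3)) (r κ τ : ℝ → ℝ)
    (t n b : ℝ → EuclideanSpace ℝ (Fin 3))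
    (hc : ContDiff ℝ (⊤ : ℕ∞) c) (hr : ContDiff ℝ (⊤ : ℕ∞) r)
    (harc : ∀ s, ‖deriv c s‖ = 1)
    (hκ : ∀ s, κ s = ‖deriv (deriv c) s‖)
    (hκpos : ∀ s, 0 < κ s)
    (ht : ∀ s, t s = deriv c s)
    (hn : ∀ s, n s = (κ s)⁻¹ • deriv (deriv c) s)
    (hb : ∀ s, b s = cross3 (t s) (n s))
    (hτ : ∀ s, deriv n s = (-κ s) • t s + τ s • b s)
    (hrpos : ∀ s, 0 < r s)
    (hr1 : ∀ s, |deriv r s| < 1)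
    (α : ℝ → ℝ → EuclideanSpace ℝ (Fin 3))
    (hα : ∀ s φ, α s φ = c s - (r s * deriv r s) • t s +
      (r s * Real.sqrt (1 - deriv r s ^ 2)) • (Real.cos φ • n s + Real.sin φ • b s))
    (hreg : ∀ s, κ s * r s * Real.sqrt (1 - deriv r s ^ 2) <
      1 - deriv r s ^ 2 - r s * deriv (deriv r) s) :
    ∀ s φ, LinearIndependent ℝ
      ![deriv (fun u => α u φ) s, deriv (fun v => α s v) φ] := by
  intro s φ
  -- basic differentiability
  have hdc : ContDiff ℝ ∞ (deriv c) := (contDiff_infty_iff_deriv.1 (hc.of_le (by simp))).2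
  have hdd_at : ∀ u, HasDerivAt (deriv c) (deriv (deriv c) u) u :=
    fun u => ((hdc.differentiable (by simp)) u).hasDerivAt
  have hκne : ∀ u, κ u ≠ 0 := fun u => ne_of_gt (hκpos u)
  have hddeq : ∀ u, deriv (deriv c) u = κ u • n u := by
    intro u
    rw [hn, smul_smul, mul_inv_cancel₀ (hκne u), one_smul]
  have ht'at : ∀ u, HasDerivAt t (κ u • n u) u := by
    intro u
    have := hdd_at u
    rw [hddeq u] at this
    have heq : t = deriv c := funext ht
    rw [heq]; exact this
  have hct : ∀ u, HasDerivAt c (t u) u := by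
    intro u
    rw [ht]
    exact ((hc.differentiable (by simp)) u).hasDerivAt
  -- frame inner products
  have htt : ∀ u, ⟪t u, t u⟫ = 1 := by
    intro u
    rw [ht, real_inner_self_eq_norm_sq, harc]; norm_num
  have hddt : ∀ u, ⟪deriv (deriv c) u, t u⟫ = 0 := by
    intro u
    have hconst : HasDerivAt (fun v => ⟪deriv c v, deriv c v⟫) 0 u := by
      have : (fun v => ⟪deriv c v, deriv c v⟫) = fun _ => (1:ℝ) := by
        funext v
        rw [real_inner_self_eq_norm_sq, harc]; norm_num
      rw [this]; exact hasDerivAt_const u 1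
    have hprod := (hdd_at u).inner ℝ (hdd_at u)
    have huniq := hconst.unique hprod
    rw [real_inner_comm (deriv c u) (deriv (deriv c) u)] at huniq
    have h2 : ⟪deriv c u, deriv (deriv c) u⟫ = 0 := by linarith
    have h3 : ⟪deriv (deriv c) u, deriv c u⟫ = 0 := by rw [real_inner_comm]; exact h2
    rw [ht]; exact h3
  have hnt : ∀ u, ⟪n u, t u⟫ = 0 := by
    intro u
    rw [hn, real_inner_smul_left, hddt, mul_zero]
  have hbt : ∀ u, ⟪b u, t u⟫ = 0 := by
    intro u; rw [hb]; exact inner_cross_left _ _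
  have hbn : ∀ u, ⟪b u, n u⟫ = 0 := by
    intro u; rw [hb]; exact inner_cross_right _ _
  have hnn : ∀ u, ⟪n u, n u⟫ = 1 := by
    intro u
    rw [hn, real_inner_smul_left, real_inner_smul_right, real_inner_self_eq_norm_sq, ← hκ,
      pow_two]
    field_simp [hκne u]
  have hbb : ∀ u, ⟪b u, b u⟫ = 1 := by
    intro u
    rw [hb, cross_lagrange, htt, hnn, real_inner_comm, hnt]
    norm_num
  -- n is differentiable
  have hndiff : ∀ u, DifferentiableAt ℝ n u := by
    intro u
    by_contra h
    have h0 : deriv n u = 0 := deriv_zero_of_not_differentiableAt h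
    rw [hτ u] at h0
    have := congrArg (fun z => ⟪z, t u⟫) h0
    simp only [inner_add_left, real_inner_smul_left, htt, hbt, inner_zero_left,
      mul_one, mul_zero, add_zero] at this
    exact (hκne u) (by linarith)
  have hnd : ∀ u, HasDerivAt n (deriv n u) u := fun u => (hndiff u).hasDerivAt
  have hn't : ⟪deriv n s, t s⟫ = -κ s := by
    rw [hτ]
    simp only [inner_add_left, real_inner_smul_left, htt, hbt]
    ring
  -- b derivative
  have hbfun : b = fun u => cross3 (t u) (n u) := funext hb
  have hbd : HasDerivAt b (cross3 (κ s • n s) (n s) + cross3 (t s) (deriv n s)) s := by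
    rw [hbfun]; exact hasDerivAt_cross (ht'at s) (hnd s)
  have hb't : ⟪cross3 (κ s • n s) (n s) + cross3 (t s) (deriv n s), t s⟫ = 0 := by
    rw [inner_add_left, inner_cross_smul_self, inner_cross_left]; norm_num
  -- scalar derivatives
  have hdr : ContDiff ℝ ∞ (deriv r) := (contDiff_infty_iff_deriv.1 (hr.of_le (by simp))).2
  have hrd : HasDerivAt r (deriv r s) s := ((hr.differentiable (by simp)) s).hasDerivAt
  have hr'd : HasDerivAt (deriv r) (deriv (deriv r) s) s :=
    ((hdr.differentiable (by simp)) s).hasDerivAt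
  have hsq_pos : 0 < 1 - deriv r s ^ 2 := by
    nlinarith [sq_abs (deriv r s), abs_nonneg (deriv r s), hr1 s]
  have sqrt_pos : 0 < Real.sqrt (1 - deriv r s ^ 2) := Real.sqrt_pos.2 hsq_pos
  have hinner_sq : HasDerivAt (fun u => 1 - deriv r u ^ 2)
      (0 - 2 * deriv r s ^ 1 * deriv (deriv r) s) s :=
    (hasDerivAt_const s 1).sub (hr'd.pow 2)
  have hsqd : HasDerivAt (fun u => Real.sqrt (1 - deriv r u ^ 2))
      (1 / (2 * Real.sqrt (1 - deriv r s ^ 2)) * (0 - 2 * deriv r s ^ 1 * deriv (deriv r) s)) s :=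
    (Real.hasDerivAt_sqrt (ne_of_gt hsq_pos)).comp s hinner_sq
  set D : ℝ := 1 / (2 * Real.sqrt (1 - deriv r s ^ 2)) * (0 - 2 * deriv r s ^ 1 * deriv (deriv r) s) with hD
  set sq : ℝ := Real.sqrt (1 - deriv r s ^ 2) with hsq
  have hμ : HasDerivAt (fun u => r u * deriv r u)
      (r s * deriv (deriv r) s + deriv r s * deriv r s) s := by
    have := hrd.mul hr'd
    exact this.congr_deriv (by ring)
  have hρ : HasDerivAt (fun u => r u * Real.sqrt (1 - deriv r u ^ 2))
      (r s * D + deriv r s * sq) s := by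
    have := hrd.mul hsqd
    exact this.congr_deriv (by ring)
  -- derivative of α in s
  set n' : EuclideanSpace ℝ (Fin 3) := deriv n s with hn'
  set b' : EuclideanSpace ℝ (Fin 3) := cross3 (κ s • n s) (n s) + cross3 (t s) n' with hb'
  have hA2 : HasDerivAt (fun u => (r u * deriv r u) • t u)
      ((r s * deriv r s) • (κ s • n s) +
        (r s * deriv (deriv r) s + deriv r s * deriv r s) • t s) s := hμ.smul (ht'at s)
  have hA3 : HasDerivAt (fun u => Real.cos φ • n u + Real.sin φ • b u)
      (Real.cos φ • n' + Real.sin φ • b') s :=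
    ((hnd s).const_smul (Real.cos φ)).add (hbd.const_smul (Real.sin φ))
  have hA4 : HasDerivAt (fun u => (r u * Real.sqrt (1 - deriv r u ^ 2)) •
        (Real.cos φ • n u + Real.sin φ • b u))
      ((r s * sq) • (Real.cos φ • n' + Real.sin φ • b') +
        (r s * D + deriv r s * sq) • (Real.cos φ • n s + Real.sin φ • b s)) s :=
    hρ.smul hA3
  set V : EuclideanSpace ℝ (Fin 3) :=
    t s - ((r s * deriv r s) • (κ s • n s) +
      (r s * deriv (deriv r) s + deriv r s * deriv r s) • t s) +
      ((r s * sq) • (Real.cos φ • n' + Real.sin φ • b') +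
        (r s * D + deriv r s * sq) • (Real.cos φ • n s + Real.sin φ • b s)) with hV
  have hF : HasDerivAt (fun u => α u φ) V s := by
    have heq : (fun u => α u φ) = fun u => c u - (r u * deriv r u) • t u +
        (r u * Real.sqrt (1 - deriv r u ^ 2)) • (Real.cos φ • n u + Real.sin φ • b u) :=
      funext fun u => hα u φ
    rw [heq, hV]
    exact ((hct s).sub hA2).add hA4
  have hVd : deriv (fun u => α u φ) s = V := hF.deriv
  -- inner product of V with t
  have hVt : ⟪V, t s⟫ = 1 - (r s * deriv (deriv r) s + deriv r s * deriv r s)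
      - (r s * sq) * (κ s * Real.cos φ) := by
    have hb't' : ⟪b', t s⟫ = 0 := hb't
    have hn't' : ⟪n', t s⟫ = -κ s := hn't
    rw [hV]
    simp only [inner_add_left, inner_sub_left, real_inner_smul_left, htt, hnt, hbt,
      hn't', hb't']
    ring
  have hApos : 0 < ⟪V, t s⟫ := by
    rw [hVt]
    have hK : 0 < κ s * r s * sq := mul_pos (mul_pos (hκpos s) (hrpos s)) sqrt_pos
    have hcos : Real.cos φ ≤ 1 := Real.cos_le_one φ
    have hregs := hreg s
    nlinarith [mul_nonneg (le_of_lt hK) (sub_nonneg.2 hcos)]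
  -- derivative of α in φ
  set W : EuclideanSpace ℝ (Fin 3) :=
    (r s * sq) • ((-Real.sin φ) • n s + Real.cos φ • b s) with hW
  have hG : HasDerivAt (fun v => α s v) W φ := by
    have heq : (fun v => α s v) = fun v => (c s - (r s * deriv r s) • t s) +
        (r s * sq) • (Real.cos v • n s + Real.sin v • b s) := by
      funext v; rw [hα]
    rw [heq, hW]
    exact ((((Real.hasDerivAt_cos φ).smul_const (n s)).add
      ((Real.hasDerivAt_sin φ).smul_const (b s))).const_smul (r s * sq)).const_add _
  have hWd : deriv (fun v => α s v) φ = W := hG.deriv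
  have hWt : ⟪W, t s⟫ = 0 := by
    rw [hW]
    simp only [inner_add_left, real_inner_smul_left, hnt, hbt]
    ring
  have hWW : ⟪W, W⟫ = (r s * sq) ^ 2 := by
    have hnb : ⟪n s, b s⟫ = 0 := by rw [real_inner_comm]; exact hbn s
    rw [hW]
    simp only [inner_add_left, inner_add_right, real_inner_smul_left, real_inner_smul_right,
      hnn, hbb, hbn, hnb]
    linear_combination ((r s * sq) ^ 2) * (Real.sin_sq_add_cos_sq φ)
  have hρpos : 0 < r s * sq := mul_pos (hrpos s) sqrt_pos
  have hWne : W ≠ 0 := by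
    intro h
    rw [h, inner_zero_left] at hWW
    nlinarith
  -- conclusion
  rw [hVd, hWd, linearIndependent_fin2]
  simp only [Matrix.cons_val_zero, Matrix.cons_val_one, Matrix.head_cons]
  refine ⟨hWne, fun a hax => ?_⟩
  have := congrArg (fun z => ⟪z, t s⟫) hax
  simp only [real_inner_smul_left, hWt, mul_zero] at this
  rw [← this] at hApos
  exact lt_irrefl _ hApos
end

section
/- Assume the regularity condition κ(s)·r(s)·√(1−r'(s)²) < 1 − r'(s)² − r(s)·r''(s) for all s, and assume κ(s) < |1 − r'(s)² − 2r(s)r''(s)| / (2r(s)√(1−r'(s)²)) for all s. Define k₁(s,φ) = (κ(s)√(1−r'(s)²)cos φ + r''(s)) / (r(s)κ(s)√(1−r'(s)²)cos φ + r(s)r''(s) − (1−r'(s)²)) and k₂(s) = 1/r(s). Then the canal surface α has no umbilic points: k₁(s,φ) < k₂(s) for every (s,φ). -/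
open scoped RealInnerProductSpace

theorem canal_surface_no_umbilics
    (c : ℝ → EuclideanSpace ℝ (Fin 3)) (r κ τ : ℝ → ℝ)
    (t n b : ℝ → EuclideanSpace ℝ (Fin 3))
    (hc : ContDiff ℝ (⊤ : ℕ∞) c) (hr : ContDiff ℝ (⊤ : ℕ∞) r)
    (harc : ∀ s, ‖deriv c s‖ = 1)
    (hκ : ∀ s, κ s = ‖deriv (deriv c) s‖)
    (hκpos : ∀ s, 0 < κ s)
    (ht : ∀ s, t s = deriv c s)
    (hn : ∀ s, n s = (κ s)⁻¹ • deriv (deriv c) s)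
    (hb : ∀ s, b s = cross3 (t s) (n s))
    (hτ : ∀ s, deriv n s = (-κ s) • t s + τ s • b s)
    (hrpos : ∀ s, 0 < r s)
    (hr1 : ∀ s, |deriv r s| < 1)
    (α : ℝ → ℝ → EuclideanSpace ℝ (Fin 3))
    (hα : ∀ s φ, α s φ = c s - (r s * deriv r s) • t s +
      (r s * Real.sqrt (1 - deriv r s ^ 2)) • (Real.cos φ • n s + Real.sin φ • b s))
    (hreg : ∀ s, κ s * r s * Real.sqrt (1 - deriv r s ^ 2) <
      1 - deriv r s ^ 2 - r s * deriv (deriv r) s)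
    (hnu : ∀ s, κ s < |1 - deriv r s ^ 2 - 2 * r s * deriv (deriv r) s| /
      (2 * r s * Real.sqrt (1 - deriv r s ^ 2))) :
    ∀ s φ,
      (κ s * Real.sqrt (1 - deriv r s ^ 2) * Real.cos φ + deriv (deriv r) s) /
        (r s * κ s * Real.sqrt (1 - deriv r s ^ 2) * Real.cos φ +
          r s * deriv (deriv r) s - (1 - deriv r s ^ 2)) < 1 / r s := by
  intro s φ
  set a : ℝ := κ s * Real.sqrt (1 - deriv r s ^ 2) with ha
  set ρ : ℝ := deriv (deriv r) s
  have hR : 0 < r s := hrpos s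
  have hD : 0 < 1 - deriv r s ^ 2 := by
    have := hr1 s
    nlinarith [abs_nonneg (deriv r s), sq_abs (deriv r s), this]
  have hsq : 0 < Real.sqrt (1 - deriv r s ^ 2) := Real.sqrt_pos.mpr hD
  have hapos : 0 < a := mul_pos (hκpos s) hsq
  have hcos : Real.cos φ ≤ 1 := Real.cos_le_one φ
  have hregs := hreg s
  have hden : r s * κ s * Real.sqrt (1 - deriv r s ^ 2) * Real.cos φ + r s * ρ - (1 - deriv r s ^ 2) < 0 := by
    have h1 : 0 < r s * κ s * Real.sqrt (1 - deriv r s ^ 2) :=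
      mul_pos (mul_pos hR (hκpos s)) hsq
    nlinarith [mul_le_mul_of_nonneg_left hcos h1.le]
  rw [div_lt_iff_of_neg hden]
  have : 0 < (1 - deriv r s ^ 2) / r s := div_pos hD hR
  field_simp
  rw [ha]
  ring_nf
  nlinarith
end

section
/- Let I ⊆ ℝ be an interval, let a, b, c : I → ℝ be continuous, and let z₁, z₂, z₃, z₄ : I → ℝ be differentiable solutions of the Riccati equation z'(s) = a(s)z(s)² + b(s)z(s) + c(s) whose values z₁(s), z₂(s), z₃(s), z₄(s) are pairwise distinct for every s ∈ I. Then the cross ratio ((z₁(s) − z₃(s))(z₂(s) − z₄(s))) / ((z₁(s) − z₄(s))(z₂(s) − z₃(s))) is constant on I. -/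
theorem riccati_cross_ratio_constant
    (I : Set ℝ) (hI : I.OrdConnected)
    (a b c : ℝ → ℝ)
    (ha : ContinuousOn a I) (hb : ContinuousOn b I) (hc : ContinuousOn c I)
    (z₁ z₂ z₃ z₄ : ℝ → ℝ)
    (hz₁ : ∀ s ∈ I, HasDerivAt z₁ (a s * z₁ s ^ 2 + b s * z₁ s + c s) s)
    (hz₂ : ∀ s ∈ I, HasDerivAt z₂ (a s * z₂ s ^ 2 + b s * z₂ s + c s) s)
    (hz₃ : ∀ s ∈ I, HasDerivAt z₃ (a s * z₃ s ^ 2 + b s * z₃ s + c s) s)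
    (hz₄ : ∀ s ∈ I, HasDerivAt z₄ (a s * z₄ s ^ 2 + b s * z₄ s + c s) s)
    (hdist : ∀ s ∈ I, z₁ s ≠ z₂ s ∧ z₁ s ≠ z₃ s ∧ z₁ s ≠ z₄ s ∧
      z₂ s ≠ z₃ s ∧ z₂ s ≠ z₄ s ∧ z₃ s ≠ z₄ s) :
    ∀ s₁ ∈ I, ∀ s₂ ∈ I,
      ((z₁ s₁ - z₃ s₁) * (z₂ s₁ - z₄ s₁)) / ((z₁ s₁ - z₄ s₁) * (z₂ s₁ - z₃ s₁)) =
      ((z₁ s₂ - z₃ s₂) * (z₂ s₂ - z₄ s₂)) / ((z₁ s₂ - z₄ s₂) * (z₂ s₂ - z₃ s₂)) := by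
  set f : ℝ → ℝ := fun s =>
    ((z₁ s - z₃ s) * (z₂ s - z₄ s)) / ((z₁ s - z₄ s) * (z₂ s - z₃ s)) with hf
  have key : ∀ s ∈ I, HasDerivWithinAt f 0 I s := by
    intro s hs
    obtain ⟨h12, h13, h14, h23, h24, h34⟩ := hdist s hs
    have hN : HasDerivAt (fun t => (z₁ t - z₃ t) * (z₂ t - z₄ t))
        ((a s * z₁ s ^ 2 + b s * z₁ s + c s - (a s * z₃ s ^ 2 + b s * z₃ s + c s)) *
          (z₂ s - z₄ s) + (z₁ s - z₃ s) *
          (a s * z₂ s ^ 2 + b s * z₂ s + c s - (a s * z₄ s ^ 2 + b s * z₄ s + c s))) s :=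
      ((hz₁ s hs).sub (hz₃ s hs)).mul ((hz₂ s hs).sub (hz₄ s hs))
    have hD : HasDerivAt (fun t => (z₁ t - z₄ t) * (z₂ t - z₃ t))
        ((a s * z₁ s ^ 2 + b s * z₁ s + c s - (a s * z₄ s ^ 2 + b s * z₄ s + c s)) *
          (z₂ s - z₃ s) + (z₁ s - z₄ s) *
          (a s * z₂ s ^ 2 + b s * z₂ s + c s - (a s * z₃ s ^ 2 + b s * z₃ s + c s))) s :=
      ((hz₁ s hs).sub (hz₄ s hs)).mul ((hz₂ s hs).sub (hz₃ s hs))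
    have hD0 : (z₁ s - z₄ s) * (z₂ s - z₃ s) ≠ 0 :=
      mul_ne_zero (sub_ne_zero.mpr h14) (sub_ne_zero.mpr h23)
    have hdiv := (hN.div hD hD0).hasDerivWithinAt (s := I)
    have h0 : ((a s * z₁ s ^ 2 + b s * z₁ s + c s - (a s * z₃ s ^ 2 + b s * z₃ s + c s)) *
          (z₂ s - z₄ s) + (z₁ s - z₃ s) *
          (a s * z₂ s ^ 2 + b s * z₂ s + c s - (a s * z₄ s ^ 2 + b s * z₄ s + c s))) *
          ((z₁ s - z₄ s) * (z₂ s - z₃ s)) -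
        (z₁ s - z₃ s) * (z₂ s - z₄ s) *
          ((a s * z₁ s ^ 2 + b s * z₁ s + c s - (a s * z₄ s ^ 2 + b s * z₄ s + c s)) *
            (z₂ s - z₃ s) + (z₁ s - z₄ s) *
            (a s * z₂ s ^ 2 + b s * z₂ s + c s - (a s * z₃ s ^ 2 + b s * z₃ s + c s))) = 0 := by
      ring
    rw [h0, zero_div] at hdiv
    exact hdiv
  intro s₁ hs₁ s₂ hs₂
  have hconv : Convex ℝ I := convex_iff_ordConnected.mpr hI
  have hle := hconv.norm_image_sub_le_of_norm_hasDerivWithin_le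
    (f' := fun _ => (0 : ℝ)) key (C := 0) (fun x _ => by simp) hs₁ hs₂
  have : f s₂ = f s₁ := sub_eq_zero.mp (by simpa using hle)
  exact this.symm
end

section
/- Let T > 0 and let a, b, c : ℝ → ℝ be continuous and T-periodic. Suppose z₁, z₂, z₃ : ℝ → ℝ are differentiable solutions of the Riccati equation z'(s) = a(s)z(s)² + b(s)z(s) + c(s), defined on all of ℝ, which are T-periodic and whose values are pairwise distinct at every s ∈ ℝ. Then every differentiable solution z : ℝ → ℝ of the same equation defined on all of ℝ is T-periodic. In particular, a periodic Riccati equation has at most two isolated periodic solutions. -/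
/-!
The difference `g = z - w` of two solutions of a Riccati equation solves the linear equation
`g' = (a (z + w) + b) g`, so `g` is either identically zero or never zero. In the latter case
the two factors of the cross ratio `(z - z₁)(z₃ - z₂) / ((z - z₂)(z₃ - z₁))` of four solutions
solve the same linear equation, so the cross ratio is constant. Evaluating it at `s` and `s + T`
with `z₁, z₂, z₃` periodic, and using that a cross ratio determines its first entry, gives
`z (s + T) = z s`.
-/

theorem eq_zero_of_hasDerivAt_mul_self {g φ : ℝ → ℝ} (hφ : Continuous φ)
    (hg : ∀ s, HasDerivAt g (φ s * g s) s) {s₀ : ℝ} (h₀ : g s₀ = 0) (s : ℝ) : g s = 0 := by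
  set F : ℝ → ℝ := fun s => ∫ t in s₀..s, φ t
  have hF : ∀ s, HasDerivAt F (φ s) s := fun s =>
    (hφ.integral_hasStrictDerivAt s₀ s).hasDerivAt
  have hconst : ∀ s, HasDerivAt (fun s => g s * Real.exp (-F s)) 0 s := fun s =>
    ((hg s).mul (hF s).neg.exp).congr_deriv (by ring)
  have := is_const_of_deriv_eq_zero (fun x => (hconst x).differentiableAt)
    (fun x => (hconst x).deriv) s s₀
  simpa [h₀, Real.exp_ne_zero] using this

noncomputable def crossRatio (x y₁ y₂ y₃ : ℝ) : ℝ :=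
  (x - y₁) * (y₃ - y₂) / ((x - y₂) * (y₃ - y₁))

theorem crossRatio_left_injective {x x' y₁ y₂ y₃ : ℝ} (hx : x ≠ y₂) (hx' : x' ≠ y₂)
    (h₁₂ : y₁ ≠ y₂) (h₁₃ : y₁ ≠ y₃) (h₂₃ : y₂ ≠ y₃)
    (h : crossRatio x y₁ y₂ y₃ = crossRatio x' y₁ y₂ y₃) : x = x' := by
  rw [crossRatio, crossRatio, div_eq_div_iff
    (mul_ne_zero (sub_ne_zero.2 hx) (sub_ne_zero.2 h₁₃.symm))
    (mul_ne_zero (sub_ne_zero.2 hx') (sub_ne_zero.2 h₁₃.symm))] at h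
  have key : (y₁ - y₂) * ((y₃ - y₂) * (y₃ - y₁)) * (x - x') = 0 := by linear_combination h
  simpa [sub_eq_zero, h₁₂, h₁₃.symm, h₂₃.symm] using key

def IsRiccatiSolution (a b c z : ℝ → ℝ) : Prop :=
  ∀ s, HasDerivAt z (a s * z s ^ 2 + b s * z s + c s) s

namespace IsRiccatiSolution

variable {a b c z w : ℝ → ℝ}

theorem continuous (hz : IsRiccatiSolution a b c z) : Continuous z :=
  Differentiable.continuous fun s => (hz s).differentiableAt

theorem hasDerivAt_sub (hz : IsRiccatiSolution a b c z) (hw : IsRiccatiSolution a b c w)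
    (s : ℝ) :
    HasDerivAt (fun s => z s - w s) ((a s * (z s + w s) + b s) * (z s - w s)) s :=
  ((hz s).sub (hw s)).congr_deriv (by ring)

theorem eq_of_eq (ha : Continuous a) (hb : Continuous b) (hz : IsRiccatiSolution a b c z)
    (hw : IsRiccatiSolution a b c w) {s₀ : ℝ} (h : z s₀ = w s₀) : z = w := by
  funext s
  exact sub_eq_zero.1 <| eq_zero_of_hasDerivAt_mul_self
    ((ha.mul (hz.continuous.add hw.continuous)).add hb) (hz.hasDerivAt_sub hw)
    (sub_eq_zero.2 h) s

variable {z₁ z₂ z₃ : ℝ → ℝ}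

theorem hasDerivAt_sub_mul_sub (hz : IsRiccatiSolution a b c z)
    (hz₁ : IsRiccatiSolution a b c z₁) (hz₂ : IsRiccatiSolution a b c z₂)
    (hz₃ : IsRiccatiSolution a b c z₃) (s : ℝ) :
    HasDerivAt (fun s => (z s - z₁ s) * (z₃ s - z₂ s))
      ((a s * (z s + z₁ s + z₂ s + z₃ s) + 2 * b s) * ((z s - z₁ s) * (z₃ s - z₂ s))) s :=
  ((hz.hasDerivAt_sub hz₁ s).mul (hz₃.hasDerivAt_sub hz₂ s)).congr_deriv (by ring)

theorem crossRatio_eq (hz : IsRiccatiSolution a b c z) (hz₁ : IsRiccatiSolution a b c z₁)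
    (hz₂ : IsRiccatiSolution a b c z₂) (hz₃ : IsRiccatiSolution a b c z₃)
    (h₂ : ∀ s, z s ≠ z₂ s) (h₁₃ : ∀ s, z₁ s ≠ z₃ s) (s t : ℝ) :
    crossRatio (z s) (z₁ s) (z₂ s) (z₃ s) = crossRatio (z t) (z₁ t) (z₂ t) (z₃ t) := by
  have hD : ∀ s, (z s - z₂ s) * (z₃ s - z₁ s) ≠ 0 := fun s =>
    mul_ne_zero (sub_ne_zero.2 (h₂ s)) (sub_ne_zero.2 (h₁₃ s).symm)
  -- numerator and denominator solve the same linear equation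
  have hderiv : ∀ s, HasDerivAt (fun s => crossRatio (z s) (z₁ s) (z₂ s) (z₃ s)) 0 s := fun s =>
    ((hz.hasDerivAt_sub_mul_sub hz₁ hz₂ hz₃ s).div (hz.hasDerivAt_sub_mul_sub hz₂ hz₁ hz₃ s)
      (hD s)).congr_deriv (by ring)
  exact is_const_of_deriv_eq_zero (fun x => (hderiv x).differentiableAt)
    (fun x => (hderiv x).deriv) s t

end IsRiccatiSolution

theorem riccati_three_periodic_implies_all_periodic_general
    (T : ℝ)
    (a b c : ℝ → ℝ)
    (ha : Continuous a) (hb : Continuous b)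
    (z₁ z₂ z₃ : ℝ → ℝ)
    (hz₁ : ∀ s, HasDerivAt z₁ (a s * z₁ s ^ 2 + b s * z₁ s + c s) s)
    (hz₂ : ∀ s, HasDerivAt z₂ (a s * z₂ s ^ 2 + b s * z₂ s + c s) s)
    (hz₃ : ∀ s, HasDerivAt z₃ (a s * z₃ s ^ 2 + b s * z₃ s + c s) s)
    (hz₁T : ∀ s, z₁ (s + T) = z₁ s) (hz₂T : ∀ s, z₂ (s + T) = z₂ s)
    (hz₃T : ∀ s, z₃ (s + T) = z₃ s)
    (hdist : ∀ s, z₁ s ≠ z₂ s ∧ z₁ s ≠ z₃ s ∧ z₂ s ≠ z₃ s) :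
    ∀ z : ℝ → ℝ, (∀ s, HasDerivAt z (a s * z s ^ 2 + b s * z s + c s) s) →
      ∀ s, z (s + T) = z s := by
  intro z hz s
  by_cases hmeet : ∃ s₀, z s₀ = z₂ s₀
  · obtain ⟨s₀, h⟩ := hmeet
    rw [IsRiccatiSolution.eq_of_eq ha hb hz hz₂ h]
    exact hz₂T s
  push Not at hmeet
  have hcr := IsRiccatiSolution.crossRatio_eq hz hz₁ hz₂ hz₃ hmeet
    (fun s => (hdist s).2.1) (s + T) s
  rw [hz₁T, hz₂T, hz₃T] at hcr
  obtain ⟨h₁₂, h₁₃, h₂₃⟩ := hdist s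
  exact crossRatio_left_injective (hz₂T s ▸ hmeet (s + T)) (hmeet s) h₁₂ h₁₃ h₂₃ hcr

theorem riccati_three_periodic_implies_all_periodic
    (T : ℝ) (hT : 0 < T)
    (a b c : ℝ → ℝ)
    (ha : Continuous a) (hb : Continuous b) (hc : Continuous c)
    (haT : ∀ s, a (s + T) = a s) (hbT : ∀ s, b (s + T) = b s)
    (hcT : ∀ s, c (s + T) = c s)
    (z₁ z₂ z₃ : ℝ → ℝ)
    (hz₁ : ∀ s, HasDerivAt z₁ (a s * z₁ s ^ 2 + b s * z₁ s + c s) s)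
    (hz₂ : ∀ s, HasDerivAt z₂ (a s * z₂ s ^ 2 + b s * z₂ s + c s) s)
    (hz₃ : ∀ s, HasDerivAt z₃ (a s * z₃ s ^ 2 + b s * z₃ s + c s) s)
    (hz₁T : ∀ s, z₁ (s + T) = z₁ s) (hz₂T : ∀ s, z₂ (s + T) = z₂ s)
    (hz₃T : ∀ s, z₃ (s + T) = z₃ s)
    (hdist : ∀ s, z₁ s ≠ z₂ s ∧ z₁ s ≠ z₃ s ∧ z₂ s ≠ z₃ s) :
    ∀ z : ℝ → ℝ, (∀ s, HasDerivAt z (a s * z s ^ 2 + b s * z s + c s) s) →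
      ∀ s, z (s + T) = z s :=
  riccati_three_periodic_implies_all_periodic_general T a b c ha hb z₁ z₂ z₃ hz₁ hz₂ hz₃ hz₁T hz₂T
    hz₃T hdist
end
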